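/- arXiv:2508.03748 — 2 statements merged into one kernel-verified Lean document; each statement's English description precedes it below -/
import Mathlib

section
/- If n ≠ m are positive integers and λ, γ are real numbers satisfying D_n(λ,γ) = 0 and D_m(λ,γ) = 0 simultaneously, then γ² = γ*_{n,m}. -/
/-- `T h n = tanh (n h) / n`. -/
noncomputable def T (h : ℝ) (n : ℕ) : ℝ := Real.tanh (n * h) / n

/-- The dispersion function
`D_n(λ,γ) = 2 n coth(n h) λ² − 2 λ γ − (2 g + n⁴ E₂₂)`. -/
noncomputable def dispersion (h g E22 : ℝ) (n : ℕ) (lam γ : ℝ) : ℝ :=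
  2 * n * (Real.cosh (n * h) / Real.sinh (n * h)) * lam ^ 2 - 2 * lam * γ
    - (2 * g + n ^ 4 * E22)

/-- The critical vorticity value `γ*_{n,m}`. -/
noncomputable def gammaStar (h g E22 : ℝ) (n m : ℕ) : ℝ :=
  ((2 * g + n ^ 4 * E22) * T h n - (2 * g + m ^ 4 * E22) * T h m) ^ 2 /
    (2 * T h n * T h m * (T h n - T h m) * ((m : ℝ) ^ 4 - (n : ℝ) ^ 4) * E22)

lemma T_pos (h : ℝ) (hh : 0 < h) (n : ℕ) (hn : 0 < n) : 0 < T h n := by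
  have : (0:ℝ) < n := by exact_mod_cast hn
  have hs : 0 < Real.sinh (n * h) := Real.sinh_pos_iff.2 (by positivity)
  exact div_pos (by rw [Real.tanh_eq_sinh_div_cosh]; exact div_pos hs (Real.cosh_pos _)) this

lemma disp_eq (h g E22 : ℝ) (hh : 0 < h) (n : ℕ) (hn : 0 < n) (lam γ : ℝ)
    (hD : dispersion h g E22 n lam γ = 0) :
    2 * lam ^ 2 = T h n * (2 * lam * γ + (2 * g + (n:ℝ) ^ 4 * E22)) := by
  have hnr : (0:ℝ) < n := by exact_mod_cast hn
  have hs : Real.sinh (n * h) ≠ 0 := ne_of_gt (Real.sinh_pos_iff.2 (by positivity))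
  have hc : Real.cosh (n * h) ≠ 0 := ne_of_gt (Real.cosh_pos _)
  unfold dispersion at hD
  unfold T
  rw [Real.tanh_eq_sinh_div_cosh]
  field_simp at hD ⊢
  ring_nf at hD ⊢
  linarith [hD]

/-- If `n ≠ m` are positive integers and `D_n(λ,γ) = D_m(λ,γ) = 0`, then
`γ² = γ*_{n,m}`. -/
theorem double_root_vorticity (h g E22 : ℝ) (hh : 0 < h) (hg : 0 < g)
    (hE : 0 < E22) (n m : ℕ) (hn : 0 < n) (hm : 0 < m) (hnm : n ≠ m)
    (lam γ : ℝ) (hDn : dispersion h g E22 n lam γ = 0)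
    (hDm : dispersion h g E22 m lam γ = 0) :
    γ ^ 2 = gammaStar h g E22 n m := by
  unfold gammaStar
  set Tn := T h n with hTn
  set Tm := T h m with hTm
  have hTnp : 0 < Tn := T_pos h hh n hn
  have hTmp : 0 < Tm := T_pos h hh m hm
  have En := disp_eq h g E22 hh n hn lam γ hDn
  have Em := disp_eq h g E22 hh m hm lam γ hDm
  rw [← hTn] at En
  rw [← hTm] at Em
  have han : (0:ℝ) < 2 * g + (n:ℝ) ^ 4 * E22 := by positivity
  have hlam : lam ≠ 0 := by
    intro h0
    rw [h0] at En
    nlinarith [mul_pos hTnp han]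
  have hn4m4 : (m:ℝ) ^ 4 - (n:ℝ) ^ 4 ≠ 0 := by
    have h4 : m ^ 4 ≠ n ^ 4 := fun he => hnm (Nat.pow_left_injective (by norm_num) he).symm
    refine sub_ne_zero.2 fun hr => h4 ?_
    exact_mod_cast hr
  have key1 : 4 * lam ^ 2 * (Tn - Tm) = 2 * Tn * Tm * ((m:ℝ) ^ 4 - (n:ℝ) ^ 4) * E22 := by
    linear_combination 2 * Tn * Em - 2 * Tm * En
  have hTnm : Tn - Tm ≠ 0 := by
    intro h0
    rw [h0] at key1
    simp only [mul_zero, zero_eq_mul, mul_eq_zero] at key1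
    simp [hTnp.ne', hTmp.ne', hE.ne'] at key1
    exact hn4m4 key1
  have key2 : 2 * lam * γ * (Tn - Tm)
      = Tm * (2 * g + (m:ℝ) ^ 4 * E22) - Tn * (2 * g + (n:ℝ) ^ 4 * E22) := by
    linear_combination Em - En
  have hD : 2 * Tn * Tm * (Tn - Tm) * ((m : ℝ) ^ 4 - (n : ℝ) ^ 4) * E22 ≠ 0 :=
    mul_ne_zero (mul_ne_zero (mul_ne_zero (mul_ne_zero
      (by positivity : (2:ℝ) * Tn ≠ 0) hTmp.ne') hTnm) hn4m4) hE.ne'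
  rw [eq_div_iff hD]
  linear_combination (-(γ ^ 2) * (Tn - Tm)) * key1 +
    (2 * lam * γ * (Tn - Tm) +
      (Tm * (2 * g + (m:ℝ) ^ 4 * E22) - Tn * (2 * g + (n:ℝ) ^ 4 * E22))) * key2
end

section
/- There do not exist pairwise distinct positive integers n, m, k and real numbers λ, γ such that D_n(λ,γ) = D_m(λ,γ) = D_k(λ,γ) = 0. Equivalently, for any fixed real values of the wave speed parameter λ and the constant vorticity γ, the dispersion relation D_n(λ,γ) = 0 holds for at most two positive integers n, so the linearized problem about the uniform horizontal flow has at most two independent solutions. -/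
/-!
With `x = n h`, `D_n(λ,γ)` is `A · x coth x − B x⁴ − C` for constants `A`, `B ≠ 0`, `C`. If this
had three positive zeros, Rolle's theorem would give two zeros `p < q` of its derivative
`A (sinh x cosh x − x) / sinh² x − 4 B x³`, i.e. `x³ sinh² x / (sinh x cosh x − x) = A / (4B)` at
both `p` and `q`. But that function is strictly increasing on `(0, ∞)`: the numerator of its
derivative is `x² sinh x (2 cosh x (sinh² x − x²) + sinh x (sinh x cosh x − x)) > 0`.
-/

open Real Set

lemma sinh_mul_cosh_sub_pos {x : ℝ} (hx : 0 < x) : 0 < sinh x * cosh x - x := by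
  have hs : x < sinh x := self_lt_sinh_iff.mpr hx
  have hc : 1 < cosh x := one_lt_cosh.mpr hx.ne'
  nlinarith

lemma hasDerivAt_mul_cosh_div_sinh {x : ℝ} (hx : sinh x ≠ 0) :
    HasDerivAt (fun x => x * cosh x / sinh x) ((sinh x * cosh x - x) / sinh x ^ 2) x := by
  refine (((hasDerivAt_id x).mul (hasDerivAt_cosh x)).div (hasDerivAt_sinh x) hx).congr_deriv ?_
  simp only [id, Pi.mul_apply]
  congr 1
  linear_combination (-x) * cosh_sq x

lemma strictMonoOn_pow_three_mul_sinh_sq_div :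
    StrictMonoOn (fun x => x ^ 3 * sinh x ^ 2 / (sinh x * cosh x - x)) (Ioi 0) := by
  have hderiv : ∀ x ∈ Ioi (0 : ℝ), HasDerivAt
      (fun x => x ^ 3 * sinh x ^ 2 / (sinh x * cosh x - x))
      (x ^ 2 * sinh x * (2 * cosh x * (sinh x ^ 2 - x ^ 2) + sinh x * (sinh x * cosh x - x))
        / (sinh x * cosh x - x) ^ 2) x := by
    intro x hx
    have hnum := (hasDerivAt_pow 3 x).mul ((hasDerivAt_sinh x).pow 2)
    have hden := ((hasDerivAt_sinh x).mul (hasDerivAt_cosh x)).sub (hasDerivAt_id x)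
    refine (hnum.div hden (sinh_mul_cosh_sub_pos hx).ne').congr_deriv ?_
    simp only [id, Pi.mul_apply, Pi.sub_apply, Pi.pow_apply]
    congr 1
    linear_combination x ^ 3 * sinh x ^ 2 * cosh_sq x
  refine strictMonoOn_of_hasDerivWithinAt_pos (convex_Ioi 0)
    (fun x hx => (hderiv x hx).continuousAt.continuousWithinAt)
    (fun x hx => (hderiv x (interior_subset hx)).hasDerivWithinAt) fun x hx => ?_
  rw [interior_Ioi] at hx
  have hx : (0 : ℝ) < x := hx
  have hsinh : x < sinh x := self_lt_sinh_iff.mpr hx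
  have := sinh_mul_cosh_sub_pos hx
  have : 0 < sinh x ^ 2 - x ^ 2 := by nlinarith
  positivity

lemma pow_three_mul_sinh_sq_div_eq_of_sub_eq_zero {A B x : ℝ} (hB : B ≠ 0) (hx : 0 < x)
    (h : A * ((sinh x * cosh x - x) / sinh x ^ 2) - 4 * B * x ^ 3 = 0) :
    x ^ 3 * sinh x ^ 2 / (sinh x * cosh x - x) = A / (4 * B) := by
  have hsinh : sinh x ≠ 0 := (sinh_pos_iff.mpr hx).ne'
  rw [div_eq_div_iff (sinh_mul_cosh_sub_pos hx).ne' (by positivity)]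
  field_simp at h
  linear_combination -h

theorem no_three_pos_roots_mul_coth_sub_pow_four {A B C a b c : ℝ} (hB : B ≠ 0) (ha : 0 < a)
    (hab : a < b) (hbc : b < c)
    (hfa : A * (a * cosh a / sinh a) - B * a ^ 4 - C = 0)
    (hfb : A * (b * cosh b / sinh b) - B * b ^ 4 - C = 0)
    (hfc : A * (c * cosh c / sinh c) - B * c ^ 4 - C = 0) : False := by
  set f := fun x : ℝ => A * (x * cosh x / sinh x) - B * x ^ 4 - C
  have hderiv : ∀ x, 0 < x →
      HasDerivAt f (A * ((sinh x * cosh x - x) / sinh x ^ 2) - 4 * B * x ^ 3) x := fun x hx =>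
    ((((hasDerivAt_mul_cosh_div_sinh (sinh_pos_iff.mpr hx).ne').const_mul A).sub
      ((hasDerivAt_pow 4 x).const_mul B)).sub_const C).congr_deriv (by ring)
  have hcont : ContinuousOn f (Icc a c) := fun x hx =>
    (hderiv x (ha.trans_le hx.1)).continuousAt.continuousWithinAt
  obtain ⟨p, hp, hp0⟩ := exists_hasDerivAt_eq_zero hab
    (hcont.mono (Icc_subset_Icc_right hbc.le)) (hfa.trans hfb.symm)
    fun x hx => hderiv x (ha.trans hx.1)
  obtain ⟨q, hq, hq0⟩ := exists_hasDerivAt_eq_zero hbc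
    (hcont.mono (Icc_subset_Icc_left hab.le)) (hfb.trans hfc.symm)
    fun x hx => hderiv x ((ha.trans hab).trans hx.1)
  have hp_pos : 0 < p := ha.trans hp.1
  have hq_pos : 0 < q := (ha.trans hab).trans hq.1
  have hlt := strictMonoOn_pow_three_mul_sinh_sq_div hp_pos hq_pos (hp.2.trans hq.1)
  simp only [pow_three_mul_sinh_sq_div_eq_of_sub_eq_zero hB hp_pos hp0,
    pow_three_mul_sinh_sq_div_eq_of_sub_eq_zero hB hq_pos hq0, lt_self_iff_false] at hlt

lemma exists_lt_lt_of_pairwise_ne {α : Type*} [LinearOrder α] {P : α → Prop} {a b c : α}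
    (hab : a ≠ b) (hac : a ≠ c) (hbc : b ≠ c) (ha : P a) (hb : P b) (hc : P c) :
    ∃ x y z, x < y ∧ y < z ∧ P x ∧ P y ∧ P z := by
  rcases hab.lt_or_gt with hab | hab <;> rcases hac.lt_or_gt with hac | hac <;>
    rcases hbc.lt_or_gt with hbc | hbc
  · exact ⟨a, b, c, hab, hbc, ha, hb, hc⟩
  · exact ⟨a, c, b, hac, hbc, ha, hc, hb⟩
  · exact (lt_asymm (hab.trans hbc) hac).elim
  · exact ⟨c, a, b, hac, hab, hc, ha, hb⟩
  · exact ⟨b, a, c, hab, hac, hb, ha, hc⟩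
  · exact (lt_asymm (hbc.trans hab) hac).elim
  · exact ⟨b, c, a, hbc, hac, hb, hc, ha⟩
  · exact ⟨c, b, a, hbc, hab, hc, hb, ha⟩

theorem no_triple_root_general (h g E22 : ℝ) (hh : 0 < h) (hE : 0 < E22) :
    ¬ ∃ (n m k : ℕ) (lam γ : ℝ), 0 < n ∧ 0 < m ∧ 0 < k ∧
      n ≠ m ∧ n ≠ k ∧ m ≠ k ∧
      dispersion h g E22 n lam γ = 0 ∧
      dispersion h g E22 m lam γ = 0 ∧
      dispersion h g E22 k lam γ = 0 := by
  rintro ⟨n, m, k, lam, γ, hn, hm, hk, hnm, hnk, hmk, hDn, hDm, hDk⟩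
  have hD : ∀ j : ℕ, dispersion h g E22 j lam γ =
      2 * lam ^ 2 / h * (j * h * cosh (j * h) / sinh (j * h)) - E22 / h ^ 4 * (j * h) ^ 4
        - (2 * lam * γ + 2 * g) := fun j => by
    unfold dispersion
    field_simp
    ring
  obtain ⟨x, y, z, hxy, hyz, ⟨hx, hDx⟩, ⟨-, hDy⟩, ⟨-, hDz⟩⟩ :=
    exists_lt_lt_of_pairwise_ne (P := fun j : ℕ => 0 < j ∧ dispersion h g E22 j lam γ = 0)
      hnm hnk hmk ⟨hn, hDn⟩ ⟨hm, hDm⟩ ⟨hk, hDk⟩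
  rw [hD] at hDx hDy hDz
  exact no_three_pos_roots_mul_coth_sub_pow_four (by positivity) (by positivity)
    (mul_lt_mul_of_pos_right (by exact_mod_cast hxy) hh)
    (mul_lt_mul_of_pos_right (by exact_mod_cast hyz) hh) hDx hDy hDz

/-- There do not exist pairwise distinct positive integers `n, m, k` and reals
`λ, γ` with `D_n(λ,γ) = D_m(λ,γ) = D_k(λ,γ) = 0`: for fixed `(λ,γ)` the
dispersion relation holds for at most two positive integers `n`. -/
theorem no_triple_root (h g E22 : ℝ) (hh : 0 < h) (hg : 0 < g) (hE : 0 < E22) :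
    ¬ ∃ (n m k : ℕ) (lam γ : ℝ), 0 < n ∧ 0 < m ∧ 0 < k ∧
      n ≠ m ∧ n ≠ k ∧ m ≠ k ∧
      dispersion h g E22 n lam γ = 0 ∧
      dispersion h g E22 m lam γ = 0 ∧
      dispersion h g E22 k lam γ = 0 :=
  no_triple_root_general h g E22 hh hE
end
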